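/- arXiv:2503.09487 — 4 statements merged into one kernel-verified Lean document; each statement's English description precedes it below -/
import Mathlib

section
/- Let n, d be positive natural numbers, C a real n×d matrix, Π a real d×d matrix, β ∈ ℝ^d, γ ∈ ℝ, and s, y ∈ ℝ^n. Set C̃ = C·Π and C_o = C − C̃, assume C̃ᵀC̃ is invertible, and let M = I_n − C̃(C̃ᵀC̃)⁻¹C̃ᵀ. Let r_s = M·s and assume r_sᵀr_s ≠ 0. If the noiseless full regression model y = C·β + γ·s holds, and y_o = C_o·β with r_{y_o} = M·y_o, then the projected-model spurious-feature weight γ' := (r_sᵀ(M·y)) / (r_sᵀ r_s) satisfies γ' = γ + (r_sᵀ r_{y_o}) / (r_sᵀ r_s). -/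
open Matrix

/-- Frisch–Waugh–Lovell style spurious-weight formula: if the full model
`y = C·β + γ·s` holds, then the projected-model spurious weight
`γ' = (r_sᵀ(M·y))/(r_sᵀ r_s)` equals `γ + (r_sᵀ r_{y_o})/(r_sᵀ r_s)`. -/
theorem spurious_weight_formula (n d : ℕ) (hn : 0 < n) (hd : 0 < d)
    (C : Matrix (Fin n) (Fin d) ℝ) (Proj : Matrix (Fin d) (Fin d) ℝ)
    (β : Fin d → ℝ) (γ : ℝ) (s y : Fin n → ℝ)
    (Ct : Matrix (Fin n) (Fin d) ℝ) (hCt : Ct = C * Proj)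
    (Co : Matrix (Fin n) (Fin d) ℝ) (hCo : Co = C - Ct)
    (hinv : Invertible (Ctᵀ * Ct))
    (M : Matrix (Fin n) (Fin n) ℝ) (hM : M = 1 - Ct * (Ctᵀ * Ct)⁻¹ * Ctᵀ)
    (rs : Fin n → ℝ) (hrs : rs = M.mulVec s)
    (hrsne : rs ⬝ᵥ rs ≠ 0)
    (hy : y = C.mulVec β + γ • s)
    (yo : Fin n → ℝ) (hyo : yo = Co.mulVec β)
    (ryo : Fin n → ℝ) (hryo : ryo = M.mulVec yo) :
    (rs ⬝ᵥ M.mulVec y) / (rs ⬝ᵥ rs) = γ + (rs ⬝ᵥ ryo) / (rs ⬝ᵥ rs) := by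
  have hMCt : M * Ct = 0 := by
    have h1 : (Ctᵀ * Ct)⁻¹ * (Ctᵀ * Ct) = 1 := Matrix.inv_mul_of_invertible _
    rw [hM, Matrix.sub_mul, Matrix.one_mul, Matrix.mul_assoc, Matrix.mul_assoc,
      h1, Matrix.mul_one, sub_self]
  have hMy : M.mulVec y = ryo + γ • rs := by
    have hC : C = Ct + Co := by rw [hCo]; abel
    rw [hy, hC, Matrix.add_mulVec, Matrix.mulVec_add, Matrix.mulVec_add,
      Matrix.mulVec_smul, ← hrs, Matrix.mulVec_mulVec, hMCt, Matrix.zero_mulVec,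
      ← hyo, ← hryo]
    abel
  rw [hMy, dotProduct_add, dotProduct_smul, smul_eq_mul, add_div,
    mul_div_assoc, div_self hrsne, mul_one, add_comm]
end

section
/- Let n, d be positive natural numbers, C a real n×d matrix, Π a real d×d matrix, β ∈ ℝ^d, γ ∈ ℝ, and s, y ∈ ℝ^n. Set C̃ = C·Π and C_o = C − C̃, assume C̃ᵀC̃ is invertible, let M = I_n − C̃(C̃ᵀC̃)⁻¹C̃ᵀ, r_s = M·s, and assume r_sᵀr_s ≠ 0. Suppose y = C·β + γ·s, and let r_{y_o} = M·(C_o·β). If r_sᵀ r_{y_o} > 0, then the projected-model spurious weight γ' := (r_sᵀ(M·y)) / (r_sᵀ r_s) is strictly larger than γ, i.e. projecting out the class-proxy directions strictly increases the reliance on the spurious feature. -/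
open Matrix

/-- If the residual correlation `r_sᵀ r_{y_o}` is strictly positive, then projecting
out the class-proxy directions strictly increases the spurious-feature weight:
`γ' > γ`. -/
theorem spurious_weight_increases (n d : ℕ) (hn : 0 < n) (hd : 0 < d)
    (C : Matrix (Fin n) (Fin d) ℝ) (Proj : Matrix (Fin d) (Fin d) ℝ)
    (β : Fin d → ℝ) (γ : ℝ) (s y : Fin n → ℝ)
    (Ct : Matrix (Fin n) (Fin d) ℝ) (hCt : Ct = C * Proj)
    (Co : Matrix (Fin n) (Fin d) ℝ) (hCo : Co = C - Ct)
    (hinv : Invertible (Ctᵀ * Ct))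
    (M : Matrix (Fin n) (Fin n) ℝ) (hM : M = 1 - Ct * (Ctᵀ * Ct)⁻¹ * Ctᵀ)
    (rs : Fin n → ℝ) (hrs : rs = M.mulVec s)
    (hrsne : rs ⬝ᵥ rs ≠ 0)
    (hy : y = C.mulVec β + γ • s)
    (ryo : Fin n → ℝ) (hryo : ryo = M.mulVec (Co.mulVec β))
    (hpos : 0 < rs ⬝ᵥ ryo) :
    γ < (rs ⬝ᵥ M.mulVec y) / (rs ⬝ᵥ rs) := by
  have hMCt : M * Ct = 0 := by
    have h1 : (Ctᵀ * Ct)⁻¹ * (Ctᵀ * Ct) = 1 := by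
      exact nonsing_inv_mul _ (isUnit_det_of_invertible _)
    rw [hM, Matrix.sub_mul, Matrix.one_mul]
    have : Ct * (Ctᵀ * Ct)⁻¹ * Ctᵀ * Ct = Ct := by
      rw [Matrix.mul_assoc, Matrix.mul_assoc, h1, Matrix.mul_one]
    rw [this, sub_self]
  have hC : C = Ct + Co := by rw [hCo]; abel
  have hMy : M.mulVec y = ryo + γ • rs := by
    rw [hy, hryo, hrs, Matrix.mulVec_add, Matrix.mulVec_smul, hC,
      Matrix.add_mulVec, Matrix.mulVec_add, Matrix.mulVec_mulVec, hMCt, Matrix.zero_mulVec, zero_add]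
  have hdot : rs ⬝ᵥ M.mulVec y = rs ⬝ᵥ ryo + γ * (rs ⬝ᵥ rs) := by
    rw [hMy, dotProduct_add, dotProduct_smul, smul_eq_mul]
  have hrspos : 0 < rs ⬝ᵥ rs :=
    lt_of_le_of_ne (Finset.sum_nonneg fun i _ => mul_self_nonneg _) (Ne.symm hrsne)
  rw [hdot]
  rw [lt_div_iff₀ hrspos]
  nlinarith
end

section
/- Let X, Y, G be nonempty finite types, ylab : G → Y a labeling of groups by classes, and P : X × G → ℝ a joint probability mass function (P(x,g) ≥ 0 for all x,g and Σ_{x,g} P(x,g) = 1) with every group marginal P(g) := Σ_x P(x,g) strictly positive. Suppose pred* : X → Y satisfies, for every x ∈ X and every y ∈ Y, Σ_{g : ylab g = pred*(x)} P(x,g)/P(g) ≥ Σ_{g : ylab g = y} P(x,g)/P(g) (i.e. pred*(x) maximizes over y the prior-corrected aggregated group score Σ_{g ∈ G(y)} P(g|x)/P(g)). Then pred* is Bayes optimal for the balanced group error: for every classifier pred : X → Y, BGE(pred*) ≤ BGE(pred). -/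
open Finset

lemma bge_rewrite {X Y G : Type*} [Fintype X] [Fintype G] [DecidableEq Y]
    (ylab : G → Y) (P : X × G → ℝ) (f : X → Y) :
    ∑ g, ∑ x, (P (x, g) / ∑ x', P (x', g)) * (if ylab g ≠ f x then 1 else 0) =
    (∑ x : X, ∑ g : G, P (x, g) / ∑ x', P (x', g)) -
      ∑ x, ∑ g ∈ univ.filter (fun g => ylab g = f x), P (x, g) / (∑ x', P (x', g)) := by
  rw [Finset.sum_comm (γ := G) (s := univ) (t := univ)]
  rw [← Finset.sum_sub_distrib]
  refine Finset.sum_congr rfl fun x _ => ?_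
  rw [Finset.sum_filter, ← Finset.sum_sub_distrib]
  refine Finset.sum_congr rfl fun g _ => ?_
  by_cases h : ylab g = f x <;> simp [h]

/-- Bayes optimality for the balanced group error: a classifier `pred*` that, at
each input `x`, maximizes the prior-corrected aggregated group score
`Σ_{g ∈ G(y)} P(g|x)/P(g)` over classes `y`, minimizes the balanced group error
`BGE(pred) = (1/|G|) · Σ_g Σ_x (P(x,g)/P(g)) · 𝟙[ylab g ≠ pred x]`. -/
theorem bayes_optimal_bge {X Y G : Type*}
    [Fintype X] [Fintype Y] [Fintype G]
    [Nonempty X] [Nonempty Y] [Nonempty G] [DecidableEq Y]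
    (ylab : G → Y) (P : X × G → ℝ)
    (hP0 : ∀ x g, 0 ≤ P (x, g))
    (hP1 : ∑ x, ∑ g, P (x, g) = 1)
    (hPg : ∀ g : G, 0 < ∑ x, P (x, g))
    (predStar : X → Y)
    (hopt : ∀ x : X, ∀ y : Y,
      ∑ g ∈ univ.filter (fun g => ylab g = y), P (x, g) / (∑ x', P (x', g)) ≤
      ∑ g ∈ univ.filter (fun g => ylab g = predStar x), P (x, g) / (∑ x', P (x', g)))
    (pred : X → Y) :
    (1 / (Fintype.card G : ℝ)) *
        ∑ g, ∑ x, (P (x, g) / ∑ x', P (x', g)) *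
          (if ylab g ≠ predStar x then 1 else 0) ≤
    (1 / (Fintype.card G : ℝ)) *
        ∑ g, ∑ x, (P (x, g) / ∑ x', P (x', g)) *
          (if ylab g ≠ pred x then 1 else 0) := by
  have hc : (0:ℝ) ≤ 1 / (Fintype.card G : ℝ) := by positivity
  refine mul_le_mul_of_nonneg_left ?_ hc
  rw [bge_rewrite, bge_rewrite]
  refine sub_le_sub_left (Finset.sum_le_sum fun x _ => hopt x (pred x)) _
end

section
/- Let X, Y, G be nonempty finite types, ylab : G → Y, h : X → G → ℝ a group scorer, and pX : X → ℝ an input marginal with pX(x) ≥ 0 and Σ_x pX(x) = 1. Define the joint probability mass function P(x,g) := pX(x) · exp(h(x)(g)) / (Σ_{g'∈G} exp(h(x)(g'))), and assume every group marginal β(g) := Σ_x P(x,g) is strictly positive. Suppose pred* : X → Y satisfies, for every x ∈ X and every y ∈ Y, Σ_{g : ylab g = pred*(x)} exp(h(x)(g))/β(g) ≥ Σ_{g : ylab g = y} exp(h(x)(g))/β(g). Then for every classifier pred : X → Y, BGE(pred*) ≤ BGE(pred). -/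
open Finset

/-- Bayes optimality of the PPA debiased classifier under a softmax group model:
with group posteriors `P(g|x) = exp(h(x)(g))/Σ_{g'} exp(h(x)(g'))`, joint
`P(x,g) = pX(x)·P(g|x)` and group priors `β(g) = Σ_x P(x,g)`, a classifier
`pred*` that aggregates the prior-corrected scores `exp(h(x)(g))/β(g)` over the
groups of each class minimizes the balanced group error. -/
theorem ppa_bayes_optimal {X Y G : Type*}
    [Fintype X] [Fintype Y] [Fintype G]
    [Nonempty X] [Nonempty Y] [Nonempty G] [DecidableEq Y]
    (ylab : G → Y) (h : X → G → ℝ) (pX : X → ℝ)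
    (hpX0 : ∀ x, 0 ≤ pX x)
    (hpX1 : ∑ x, pX x = 1)
    (P : X × G → ℝ)
    (hPdef : ∀ x g, P (x, g) = pX x * Real.exp (h x g) / ∑ g', Real.exp (h x g'))
    (hβ : ∀ g : G, 0 < ∑ x, P (x, g))
    (predStar : X → Y)
    (hopt : ∀ x : X, ∀ y : Y,
      ∑ g ∈ univ.filter (fun g => ylab g = y),
        Real.exp (h x g) / (∑ x', P (x', g)) ≤
      ∑ g ∈ univ.filter (fun g => ylab g = predStar x),
        Real.exp (h x g) / (∑ x', P (x', g)))
    (pred : X → Y) :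
    (1 / (Fintype.card G : ℝ)) *
        ∑ g, ∑ x, (P (x, g) / ∑ x', P (x', g)) *
          (if ylab g ≠ predStar x then 1 else 0) ≤
    (1 / (Fintype.card G : ℝ)) *
        ∑ g, ∑ x, (P (x, g) / ∑ x', P (x', g)) *
          (if ylab g ≠ pred x then 1 else 0) := by
  apply mul_le_mul_of_nonneg_left _ (by positivity)
  have hid : ∀ (q : X → Y),
      ∑ g, ∑ x, (P (x, g) / ∑ x', P (x', g)) * (if ylab g ≠ q x then 1 else 0)
      = (∑ g, ∑ x, P (x, g) / ∑ x', P (x', g))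
        - ∑ x, ∑ g ∈ univ.filter (fun g => ylab g = q x),
            P (x, g) / ∑ x', P (x', g) := by
    intro q
    have step : ∀ g x, (P (x, g) / ∑ x', P (x', g)) * (if ylab g ≠ q x then 1 else 0)
        = P (x, g) / (∑ x', P (x', g))
          - (if ylab g = q x then P (x, g) / ∑ x', P (x', g) else 0) := by
      intro g x; by_cases hh : ylab g = q x <;> simp [hh]
    simp_rw [step, Finset.sum_sub_distrib, Finset.sum_filter]
    rw [Finset.sum_comm (s := univ) (t := univ)
      (f := fun g x => if ylab g = q x then P (x, g) / ∑ x', P (x', g) else 0)]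
  rw [hid predStar, hid pred]
  apply sub_le_sub_left
  apply Finset.sum_le_sum
  intro x _
  have hZ : (0:ℝ) < ∑ g', Real.exp (h x g') :=
    Finset.sum_pos (fun g _ => Real.exp_pos _) univ_nonempty
  have hfac : ∀ (y : Y),
      ∑ g ∈ univ.filter (fun g => ylab g = y), P (x, g) / ∑ x', P (x', g)
      = (pX x / ∑ g', Real.exp (h x g')) *
        ∑ g ∈ univ.filter (fun g => ylab g = y),
          Real.exp (h x g) / ∑ x', P (x', g) := by
    intro y
    rw [Finset.mul_sum]
    refine Finset.sum_congr rfl fun g _ => ?_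
    rw [hPdef]
    ring
  rw [hfac, hfac]
  exact mul_le_mul_of_nonneg_left (hopt x (pred x)) (div_nonneg (hpX0 x) hZ.le)
end
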